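/- arXiv:1707.00635 — 4 statements merged into one kernel-verified Lean document; each statement's English description precedes it below -/
import Mathlib

section
/- Let L/K be an extension of finite fields and let χ : Lˣ → ℂˣ be a character (a group homomorphism). Let K[χ] denote the stabilizer field of χ, i.e. the fixed field in L of the stabilizer of χ in Gal(L/K) under the action σ·χ = χ ∘ σ. Then there exists a unique character χ_reg : K[χ]ˣ → ℂˣ such that χ = χ_reg ∘ N_{L/K[χ]} and χ_reg is K-regular, i.e. the stabilizer of χ_reg in Gal(K[χ]/K) under the action σ·χ_reg = χ_reg ∘ σ is trivial. -/
/-- The stabilizer of a character `χ : Lˣ → ℂˣ` under the precomposition action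
`σ · χ = χ ∘ σ` of `Gal(L/K)`, as a subgroup of `L ≃ₐ[K] L`. -/
def charStab (K L : Type) [Field K] [Field L] [Algebra K L] (χ : Lˣ →* ℂˣ) :
    Subgroup (L ≃ₐ[K] L) where
  carrier := {σ | ∀ x : Lˣ, χ (Units.map (σ : L →* L) x) = χ x}
  one_mem' := fun x => by
    have h : Units.map ((1 : L ≃ₐ[K] L) : L →* L) x = x := by ext; simp
    rw [h]
  mul_mem' := fun {σ τ} hσ hτ x => by
    have h : Units.map ((σ * τ : L ≃ₐ[K] L) : L →* L) x
        = Units.map (σ : L →* L) (Units.map (τ : L →* L) x) := by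
      ext; simp
    rw [h, hσ, hτ]
  inv_mem' := fun {σ} hσ x => by
    have h := hσ (Units.map ((σ⁻¹ : L ≃ₐ[K] L) : L →* L) x)
    have h2 : Units.map (σ : L →* L) (Units.map ((σ⁻¹ : L ≃ₐ[K] L) : L →* L) x) = x := by
      ext
      show (σ * σ⁻¹) (x : L) = (x : L)
      rw [mul_inv_cancel, AlgEquiv.one_apply]
    rw [h2] at h
    exact h.symm

/-- The stabilizer field `K[χ]` of a character `χ : Lˣ → ℂˣ`: the fixed field in `L`
of the stabilizer of `χ` in `Gal(L/K)` under the action `σ · χ = χ ∘ σ`. -/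
def stabField (K L : Type) [Field K] [Field L] [Algebra K L] (χ : Lˣ →* ℂˣ) :
    IntermediateField K L :=
  IntermediateField.fixedField (charStab K L χ)

/-!
Write `F = K[χ]` and `q = |F|`. The Frobenius `x ↦ x ^ q` of `L/F` fixes `F`, so by the Galois
correspondence it stabilizes `χ`; hence `χ` kills every `v ^ (q - 1) = Frob v / v`. In the cyclic
group `Lˣ` these are exactly the elements of norm one (both subgroups have index `q - 1`, the norm
being surjective), so `χ` factors through the surjective norm `Lˣ → Fˣ`, uniquely. If `σ ∈ Gal(F/K)`
fixes the factor, any lift `τ ∈ Gal(L/K)` commutes with the norm and so stabilizes `χ`; then `τ`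
fixes `F`, i.e. `σ = 1`.
-/

theorem FiniteField.ker_unitsMap_norm (F L : Type*) [Field F] [Field L] [Finite L]
    [Algebra F L] :
    (Units.map (Algebra.norm F : L →* F)).ker =
      (powMonoidHom (Nat.card F - 1) : Lˣ →* Lˣ).range := by
  have := Finite.of_injective _ (algebraMap F L).injective
  refine (Subgroup.eq_of_le_of_card_ge ?_ ?_).symm
  · rintro _ ⟨v, rfl⟩
    rw [MonoidHom.mem_ker, powMonoidHom_apply, map_pow, ← Nat.card_units]
    exact pow_card_eq_one'
  · have hker := Subgroup.card_mul_index (Units.map (Algebra.norm F : L →* F)).ker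
    rw [Subgroup.index_ker, MonoidHom.range_eq_top.mpr (FiniteField.unitsMap_norm_surjective F L),
      Subgroup.card_top, Nat.card_units] at hker
    rw [IsCyclic.card_powMonoidHom_range, Nat.gcd_eq_right (Dvd.intro_left _ hker), ← hker,
      Nat.mul_div_cancel _ (Nat.sub_pos_of_lt Finite.one_lt_card)]

theorem FiniteField.unitsMap_norm_map_algEquiv {K F L : Type*} [Field K] [Field F] [Field L]
    [Finite L] [Algebra K F] [Algebra K L] [Algebra F L] [IsScalarTower K F L] [Normal K F]
    (σ : L ≃ₐ[K] L) (x : Lˣ) :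
    Units.map (Algebra.norm F : L →* F) (Units.map (σ : L →* L) x) =
      Units.map (σ.restrictNormal F : F →* F) (Units.map (Algebra.norm F : L →* F) x) := by
  ext
  apply (algebraMap F L).injective
  simp only [Units.coe_map, MonoidHom.coe_coe]
  rw [AlgEquiv.restrictNormal_commutes, FiniteField.algebraMap_norm_eq_pow,
    FiniteField.algebraMap_norm_eq_pow, map_pow]

section stabField

variable {K L : Type} [Field K] [Field L] [Finite L] [Algebra K L] (χ : Lˣ →* ℂˣ)

theorem fixingSubgroup_stabField : (stabField K L χ).fixingSubgroup = charStab K L χ :=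
  IntermediateField.fixingSubgroup_fixedField _

theorem map_pow_card_stabField (v : Lˣ) : χ (v ^ Nat.card (stabField K L χ)) = χ v := by
  have := Fintype.ofFinite (stabField K L χ)
  set φ := (FiniteField.frobeniusAlgEquivOfAlgebraic (stabField K L χ) L).restrictScalars K
  have hφ : φ ∈ charStab K L χ := by
    rw [← fixingSubgroup_stabField, IntermediateField.mem_fixingSubgroup_iff]
    intro x hx
    exact AlgEquiv.commutes _ (⟨x, hx⟩ : stabField K L χ)
  rw [← hφ v, Nat.card_eq_fintype_card]
  congr 1

theorem ker_unitsMap_norm_stabField_le_ker :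
    (Units.map (Algebra.norm (stabField K L χ) : L →* stabField K L χ)).ker ≤ χ.ker := by
  rw [FiniteField.ker_unitsMap_norm]
  rintro _ ⟨v, rfl⟩
  have hQ : 0 < Nat.card (stabField K L χ) := Nat.card_pos
  rw [MonoidHom.mem_ker, powMonoidHom_apply, ← mul_eq_right, ← map_mul, ← pow_succ,
    Nat.sub_add_cancel hQ, map_pow_card_stabField]

theorem eq_one_of_comp_norm_stabField (ψ : (stabField K L χ)ˣ →* ℂˣ)
    (hψ : χ = ψ.comp (Units.map (Algebra.norm (stabField K L χ) : L →* stabField K L χ)))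
    (σ : stabField K L χ ≃ₐ[K] stabField K L χ)
    (hσ : ∀ y, ψ (Units.map (σ : stabField K L χ →* stabField K L χ) y) = ψ y) : σ = 1 := by
  obtain ⟨τ, rfl⟩ := AlgEquiv.restrictNormalHom_surjective (K₁ := stabField K L χ) L σ
  have hτ : τ ∈ charStab K L χ := fun x => by
    rw [hψ, MonoidHom.comp_apply, MonoidHom.comp_apply, FiniteField.unitsMap_norm_map_algEquiv]
    exact hσ _
  rw [← MonoidHom.mem_ker, IntermediateField.restrictNormalHom_ker, fixingSubgroup_stabField]
  exact hτ

end stabField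

theorem statement0_general (K L : Type) [Field K] [Field L] [Fintype L]
    [Algebra K L] (χ : Lˣ →* ℂˣ) :
    ∃! χreg : (↥(stabField K L χ))ˣ →* ℂˣ,
      χ = χreg.comp
          (Units.map (Algebra.norm ↥(stabField K L χ) : L →* ↥(stabField K L χ))) ∧
      ∀ σ : ↥(stabField K L χ) ≃ₐ[K] ↥(stabField K L χ),
        (∀ y : (↥(stabField K L χ))ˣ,
          χreg (Units.map (σ : ↥(stabField K L χ) →* ↥(stabField K L χ)) y) = χreg y) →
        σ = 1 := by
  have hN := FiniteField.unitsMap_norm_surjective (stabField K L χ) L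
  obtain ⟨χreg, hχ⟩ : ∃ ψ : (stabField K L χ)ˣ →* ℂˣ, χ = ψ.comp (Units.map (Algebra.norm _)) :=
    ⟨_, (MonoidHom.liftOfRightInverse_comp _ _ (Function.rightInverse_surjInv hN)
      ⟨χ, ker_unitsMap_norm_stabField_le_ker χ⟩).symm⟩
  refine ⟨χreg, ⟨hχ, eq_one_of_comp_norm_stabField χ χreg hχ⟩, fun ψ hψ => ?_⟩
  exact (MonoidHom.cancel_right hN).mp (hψ.1.symm.trans hχ)

/-- For an extension `L/K` of finite fields and a character `χ : Lˣ → ℂˣ`, there is a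
unique character `χreg` of `K[χ]ˣ` (where `K[χ]` is the stabilizer field of `χ`) such
that `χ = χreg ∘ N_{L/K[χ]}` and `χreg` is `K`-regular, i.e. the stabilizer of `χreg`
in `Gal(K[χ]/K)` under precomposition is trivial. -/
theorem statement0 (K L : Type) [Field K] [Field L] [Fintype K] [Fintype L]
    [Algebra K L] (χ : Lˣ →* ℂˣ) :
    ∃! χreg : (↥(stabField K L χ))ˣ →* ℂˣ,
      χ = χreg.comp
          (Units.map (Algebra.norm ↥(stabField K L χ) : L →* ↥(stabField K L χ))) ∧
      ∀ σ : ↥(stabField K L χ) ≃ₐ[K] ↥(stabField K L χ),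
        (∀ y : (↥(stabField K L χ))ˣ,
          χreg (Units.map (σ : ↥(stabField K L χ) →* ↥(stabField K L χ)) y) = χreg y) →
        σ = 1 :=
  statement0_general K L χ
end

section
/- Let L/K be an extension of finite fields, let χ : Lˣ → ℂˣ be a character, let F be an intermediate field of L/K, and let ψ : Fˣ → ℂˣ be a K-regular character (i.e. the stabilizer of ψ in Gal(F/K) under precomposition is trivial). If χ = ψ ∘ N_{L/F}, then F is equal to the stabilizer field of χ, i.e. F is the fixed field in L of the stabilizer of χ in Gal(L/K) under the action σ·χ = χ ∘ σ. -/
theorem IntermediateField.norm_algEquiv_apply {K L : Type*} [Field K] [Field L] [Algebra K L]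
    (F : IntermediateField K L) [Normal K F] (σ : L ≃ₐ[K] L) (x : L) :
    Algebra.norm F (σ x) = σ.restrictNormal F (Algebra.norm F x) := by
  have hσ : (algebraMap F L).comp ((σ.restrictNormal F : F ≃+* F) : F →+* F) =
      ((σ : L ≃+* L) : L →+* L).comp (algebraMap F L) :=
    RingHom.ext (σ.restrictNormal_commutes F)
  rw [Algebra.norm_eq_of_equiv_equiv _ _ hσ x]
  exact ((σ.restrictNormal F).toRingEquiv.apply_symm_apply _).symm

theorem charStab_comp_norm (K L : Type) [Field K] [Field L] [Algebra K L] [Finite L]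
    (F : IntermediateField K L) [Normal K F] (ψ : Fˣ →* ℂˣ) :
    charStab K L (ψ.comp (Units.map (Algebra.norm F : L →* F))) =
      (charStab K F ψ).comap (AlgEquiv.restrictNormalHom F) := by
  have hnorm (σ : L ≃ₐ[K] L) (x : Lˣ) :
      Units.map (Algebra.norm F : L →* F) (Units.map (σ : L →* L) x) =
        Units.map ((σ.restrictNormal F : F ≃ₐ[K] F) : F →* F)
          (Units.map (Algebra.norm F : L →* F) x) :=
    Units.ext (F.norm_algEquiv_apply σ x)
  ext σ
  change (∀ x : Lˣ, _ = _) ↔ ∀ y : Fˣ, _ = _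
  simp only [MonoidHom.comp_apply, hnorm]
  exact ((FiniteField.unitsMap_norm_surjective F L).forall
    (p := fun y => ψ (Units.map ((σ.restrictNormal F : F ≃ₐ[K] F) : F →* F) y) = ψ y)).symm

theorem statement1_general (K L : Type) [Field K] [Field L] [Fintype L]
    [Algebra K L] (χ : Lˣ →* ℂˣ) (F : IntermediateField K L) (ψ : (↥F)ˣ →* ℂˣ)
    (hreg : ∀ σ : ↥F ≃ₐ[K] ↥F,
      (∀ y : (↥F)ˣ, ψ (Units.map (σ : ↥F →* ↥F) y) = ψ y) → σ = 1)
    (hχ : χ = ψ.comp (Units.map (Algebra.norm ↥F : L →* ↥F))) :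
    F = IntermediateField.fixedField (charStab K L χ) := by
  have : FiniteDimensional K L := Module.Finite.of_finite
  have hψ : charStab K F ψ = ⊥ := (Subgroup.eq_bot_iff_forall _).mpr hreg
  rw [hχ, charStab_comp_norm, hψ, MonoidHom.comap_bot, F.restrictNormalHom_ker,
    IsGalois.fixedField_fixingSubgroup]

/-- Let `L/K` be an extension of finite fields, `χ : Lˣ → ℂˣ` a character, `F` an
intermediate field of `L/K`, and `ψ : Fˣ → ℂˣ` a `K`-regular character (the stabilizer
of `ψ` in `Gal(F/K)` under precomposition is trivial). If `χ = ψ ∘ N_{L/F}`, then `F`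
is the stabilizer field of `χ`, i.e. the fixed field in `L` of the stabilizer of `χ`
in `Gal(L/K)`. -/
theorem statement1 (K L : Type) [Field K] [Field L] [Fintype K] [Fintype L]
    [Algebra K L] (χ : Lˣ →* ℂˣ) (F : IntermediateField K L) (ψ : (↥F)ˣ →* ℂˣ)
    (hreg : ∀ σ : ↥F ≃ₐ[K] ↥F,
      (∀ y : (↥F)ˣ, ψ (Units.map (σ : ↥F →* ↥F) y) = ψ y) → σ = 1)
    (hχ : χ = ψ.comp (Units.map (Algebra.norm ↥F : L →* ↥F))) :
    F = IntermediateField.fixedField (charStab K L χ) :=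
  statement1_general K L χ F ψ hreg hχ
end

section
/- Let L/K be an extension of finite fields and let χ : Lˣ → ℂˣ be a character. Then χ ∘ σ = χ for every σ ∈ Gal(L/K) if and only if there exists a character χ₀ : Kˣ → ℂˣ with χ = χ₀ ∘ N_{L/K}; moreover, when it exists, such a character χ₀ is unique. -/
/-!
Write `q = |K|`. Since `Lˣ` is cyclic and `N_{L/K}` acts on it as the power map with exponent
`(|L| - 1) / (q - 1)`, counting in the cyclic group shows that the kernel of the norm is the set of
`(q - 1)`-st powers `y ^ (q - 1) = Frob(y) / y`. A Galois-invariant character kills these, hence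
factors through the norm, which is surjective on units; surjectivity also gives uniqueness.
Conversely `N ∘ σ = N`.
-/

theorem IsCyclic.ker_powMonoidHom_eq_range {G : Type*} [CommGroup G] [IsCyclic G] [Finite G]
    {a b : ℕ} (h : Nat.card G = a * b) :
    (powMonoidHom b : G →* G).ker = (powMonoidHom a : G →* G).range := by
  have ha : a ≠ 0 := by rintro rfl; exact Nat.card_pos.ne' (by simpa using h)
  refine (Subgroup.eq_of_le_of_card_ge ?_ ?_).symm
  · rintro _ ⟨x, rfl⟩
    simp [← pow_mul, ← h, pow_card_eq_one']
  · rw [IsCyclic.card_powMonoidHom_ker, IsCyclic.card_powMonoidHom_range, h,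
      Nat.gcd_mul_left_left, Nat.gcd_mul_right_left,
      Nat.mul_div_cancel_left _ (Nat.pos_of_ne_zero ha)]

namespace FiniteField

variable (K L : Type*) [Field K] [Field L] [Algebra K L]

theorem ker_unitsMap_norm_s2 [Finite L] :
    (Units.map (Algebra.norm K : L →* K)).ker =
      (powMonoidHom (Nat.card K - 1) : Lˣ →* Lˣ).range := by
  have : Finite K := Finite.of_injective _ (algebraMap K L).injective
  have hker : (Units.map (Algebra.norm K : L →* K)).ker =
      (powMonoidHom ((Nat.card L - 1) / (Nat.card K - 1)) : Lˣ →* Lˣ).ker := by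
    ext u
    simp [Units.ext_iff, ← (algebraMap K L).injective.eq_iff, algebraMap_norm_eq_pow]
  rw [hker]
  apply IsCyclic.ker_powMonoidHom_eq_range
  rw [Nat.card_units, Module.natCard_eq_pow_finrank (K := K),
    Nat.mul_div_cancel' (Nat.sub_one_dvd_pow_sub_one _ _)]

theorem range_powMonoidHom_card_sub_one_le_ker [Fintype K] [Finite L] {G : Type*} [Group G]
    (χ : Lˣ →* G)
    (hχ : χ.comp (Units.map (frobeniusAlgEquivOfAlgebraic K L : L →* L)) = χ) :
    (powMonoidHom (Fintype.card K - 1) : Lˣ →* Lˣ).range ≤ χ.ker := by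
  rintro _ ⟨y, rfl⟩
  have hfrob : χ (y ^ Fintype.card K) = χ y := DFunLike.congr_fun hχ y
  rw [MonoidHom.mem_ker, powMonoidHom_apply, ← mul_left_inj (χ y), one_mul, ← map_mul,
    ← pow_succ, Nat.sub_add_cancel Fintype.card_pos, hfrob]

theorem unitsMap_norm_comp_unitsMap_algEquiv (σ : L ≃ₐ[K] L) :
    (Units.map (Algebra.norm K : L →* K)).comp (Units.map (σ : L →* L)) =
      Units.map (Algebra.norm K : L →* K) := by
  ext u
  exact Algebra.norm_eq_of_algEquiv σ u

end FiniteField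

open FiniteField

/-- Let `L/K` be an extension of finite fields and `χ : Lˣ → ℂˣ` a character. Then
`χ ∘ σ = χ` for every `σ ∈ Gal(L/K)` if and only if there is a character
`χ₀ : Kˣ → ℂˣ` with `χ = χ₀ ∘ N_{L/K}`; moreover such a `χ₀`, when it exists, is
unique. -/
theorem statement2 (K L : Type) [Field K] [Field L] [Fintype K] [Fintype L]
    [Algebra K L] (χ : Lˣ →* ℂˣ) :
    ((∀ σ : L ≃ₐ[K] L, χ.comp (Units.map (σ : L →* L)) = χ) ↔
      ∃ χ₀ : Kˣ →* ℂˣ, χ = χ₀.comp (Units.map (Algebra.norm K : L →* K))) ∧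
    ∀ χ₀ χ₁ : Kˣ →* ℂˣ,
      χ = χ₀.comp (Units.map (Algebra.norm K : L →* K)) →
      χ = χ₁.comp (Units.map (Algebra.norm K : L →* K)) → χ₀ = χ₁ := by
  set N : Lˣ →* Kˣ := Units.map (Algebra.norm K : L →* K)
  have hN : Function.Surjective N := unitsMap_norm_surjective K L
  refine ⟨⟨fun hχ ↦ ?_, ?_⟩, fun χ₀ χ₁ h₀ h₁ ↦ (MonoidHom.cancel_right hN).mp (h₀ ▸ h₁)⟩
  · have hker : N.ker ≤ χ.ker := by
      rw [ker_unitsMap_norm_s2, Nat.card_eq_fintype_card]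
      exact range_powMonoidHom_card_sub_one_le_ker K L χ (hχ _)
    exact ⟨N.liftOfSurjective hN ⟨χ, hker⟩, (N.liftOfRightInverse_comp _ _ ⟨χ, hker⟩).symm⟩
  · rintro ⟨χ₀, rfl⟩ σ
    rw [MonoidHom.comp_assoc, unitsMap_norm_comp_unitsMap_algEquiv]
end

section
/- Let L/K be an extension of finite fields and let T denote the image of Lˣ in G = (End_K(L))ˣ under the embedding sending x to multiplication by x. Then: (a) for every g in the normalizer of T in G there exists a unique field automorphism σ_g ∈ Gal(L/K) such that g ∘ (multiplication by x) ∘ g⁻¹ = (multiplication by σ_g(x)) for all x ∈ Lˣ; (b) the map g ↦ σ_g is a surjective group homomorphism from the normalizer of T onto Gal(L/K) with kernel exactly T. In particular, the quotient of the normalizer of T by T is cyclic of order [L:K]. -/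
/-- The embedding of `Lˣ` into the unit group of `End_K(L)` sending `x` to
multiplication by `x`. -/
noncomputable def mulUnits (K L : Type) [Field K] [Field L] [Algebra K L] :
    Lˣ →* (Module.End K L)ˣ :=
  Units.map (Algebra.lmul K L : L →* Module.End K L)

/-- The image `T` of `Lˣ` in `G = (End_K(L))ˣ` (a maximal elliptic torus). -/
noncomputable def torus (K L : Type) [Field K] [Field L] [Algebra K L] :
    Subgroup (Module.End K L)ˣ :=
  (mulUnits K L).range

/-!
An element `g` of the normalizer of `T` normalizes the `K`-subalgebra `L ⊆ End_K(L)` spanned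
by `T`, so conjugation by `g` restricts to a `K`-algebra endomorphism `σ_g` of `L`, bijective
since `L/K` is finite. Each `σ ∈ Gal(L/K)` is itself a `K`-linear automorphism of `L`, and it
conjugates multiplication by `x` into multiplication by `σ x`; so `g ↦ σ_g` is onto. If
`σ_g = 1` then `g` commutes with every multiplication, hence `g y = y * g 1` and `g ∈ T`.
Finally `Gal(L/K)` is cyclic of order `[L:K]`.
-/

local notation "𝒩[" K ", " L "]" => Subgroup.normalizer (torus K L : Set (Module.End K L)ˣ)

section

variable {K L : Type} [Field K] [Field L] [Algebra K L]

@[simp]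
lemma val_mulUnits (x : Lˣ) : (mulUnits K L x : Module.End K L) = Algebra.lmul K L x := rfl

lemma mem_torus_iff {g : (Module.End K L)ˣ} :
    g ∈ torus K L ↔ ∃ x : L, (g : Module.End K L) = Algebra.lmul K L x := by
  constructor
  · rintro ⟨x, rfl⟩
    exact ⟨x, rfl⟩
  · rintro ⟨x, hx⟩
    have hx0 : x ≠ 0 := by
      rintro rfl
      simpa [hx] using g.ne_zero
    exact ⟨Units.mk0 x hx0, Units.ext hx.symm⟩

lemma eq_lmul_of_forall_commute {f : Module.End K L}
    (hf : ∀ x : L, Commute f (Algebra.lmul K L x)) : f = Algebra.lmul K L (f 1) := by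
  ext y
  simpa [mul_comm] using (LinearMap.congr_fun (hf y) 1)

lemma mem_torus_iff_forall_commute {g : (Module.End K L)ˣ} :
    g ∈ torus K L ↔ ∀ x : L, Commute (g : Module.End K L) (Algebra.lmul K L x) := by
  rw [mem_torus_iff]
  constructor
  · rintro ⟨y, hy⟩ x
    rw [hy, Commute, SemiconjBy, ← map_mul, ← map_mul, mul_comm]
  · exact fun h ↦ ⟨_, eq_lmul_of_forall_commute h⟩

lemma conj_mulUnits_eq_iff (g : (Module.End K L)ˣ) (σ : L →ₐ[K] L) :
    (∀ x : Lˣ, g * mulUnits K L x * g⁻¹ = mulUnits K L (Units.map (σ : L →* L) x)) ↔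
      ∀ x : L, g * Algebra.lmul K L x * ↑g⁻¹ = Algebra.lmul K L (σ x) := by
  constructor
  · intro h x
    rcases eq_or_ne x 0 with rfl | hx
    · simp
    · simpa using congrArg Units.val (h (Units.mk0 x hx))
  · exact fun h x ↦ Units.ext (by simpa using h x)

lemma mem_normalizer_of_conj {g : (Module.End K L)ˣ} (σ : L ≃ₐ[K] L)
    (hσ : ∀ x : Lˣ, g * mulUnits K L x * g⁻¹ = mulUnits K L (Units.map (σ : L →* L) x)) :
    g ∈ 𝒩[K, L] := by
  refine Subgroup.mem_normalizer_iff.mpr fun h ↦ ⟨?_, ?_⟩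
  · rintro ⟨x, rfl⟩
    exact ⟨_, (hσ x).symm⟩
  · rintro ⟨y, hy⟩
    have hconj : g * mulUnits K L (Units.map (σ.symm : L →* L) y) * g⁻¹ = g * h * g⁻¹ := by
      rw [hσ, ← hy]
      congr
      ext
      simp
    exact ⟨_, mul_left_cancel (mul_right_cancel hconj)⟩

lemma conj_lmul_mem_range {g : (Module.End K L)ˣ} (hg : g ∈ 𝒩[K, L]) (x : L) :
    ConjAct.toConjAct g • Algebra.lmul K L x ∈ (Algebra.lmul K L).range := by
  rcases eq_or_ne x 0 with rfl | hx
  · simp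
  · obtain ⟨y, hy⟩ := (Subgroup.mem_normalizer_iff.mp hg _).mp ⟨Units.mk0 x hx, rfl⟩
    exact ⟨y, by simpa [ConjAct.units_smul_def] using congrArg Units.val hy⟩

/-- Conjugation by `g`, transported to `L` through the embedding `x ↦ lmul x`. -/
noncomputable def normalizerAlgHom {g : (Module.End K L)ˣ} (hg : g ∈ 𝒩[K, L]) :
    L →ₐ[K] L :=
  (AlgEquiv.ofInjective _ Algebra.lmul_injective).symm.toAlgHom.comp
    (((MulSemiringAction.toAlgHom K _ (ConjAct.toConjAct g)).comp (Algebra.lmul K L)).codRestrict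
      _ (conj_lmul_mem_range hg))

lemma lmul_normalizerAlgHom {g : (Module.End K L)ˣ} (hg : g ∈ 𝒩[K, L]) (x : L) :
    Algebra.lmul K L (normalizerAlgHom hg x) = g * Algebra.lmul K L x * ↑g⁻¹ := by
  change Algebra.lmul K L ((AlgEquiv.ofInjective _ Algebra.lmul_injective).symm
    ⟨_, conj_lmul_mem_range hg x⟩) = _
  rw [← AlgEquiv.ofInjective_apply _ Algebra.lmul_injective, AlgEquiv.apply_symm_apply]
  exact ConjAct.units_smul_def _ _

noncomputable def galToUnits : (L ≃ₐ[K] L) →* (Module.End K L)ˣ :=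
  (Units.map (AlgEquiv.toLinearMapHom K L)).comp toUnits.toMonoidHom

lemma galToUnits_conj (σ : L ≃ₐ[K] L) (x : Lˣ) :
    galToUnits σ * mulUnits K L x * (galToUnits σ)⁻¹ =
      mulUnits K L (Units.map (σ : L →* L) x) := by
  refine Units.ext (LinearMap.ext fun y ↦ ?_)
  simp [galToUnits]

variable [Finite L]

noncomputable def normalizerToGal : 𝒩[K, L] →* (L ≃ₐ[K] L) where
  toFun g := AlgEquiv.ofBijective (normalizerAlgHom g.2) (AlgHom.bijective _)
  map_one' := AlgEquiv.ext fun x ↦ Algebra.lmul_injective (R := K)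
    (by simp [lmul_normalizerAlgHom])
  map_mul' g h := AlgEquiv.ext fun x ↦ Algebra.lmul_injective (R := K)
    (by simp [lmul_normalizerAlgHom, mul_assoc])

lemma lmul_normalizerToGal (g : 𝒩[K, L]) (x : L) :
    Algebra.lmul K L (normalizerToGal g x) =
      ((g : (Module.End K L)ˣ) : Module.End K L) * Algebra.lmul K L x *
        ↑(g : (Module.End K L)ˣ)⁻¹ :=
  lmul_normalizerAlgHom g.2 x

lemma conj_eq_normalizerToGal (g : 𝒩[K, L]) (x : Lˣ) :
    (g : (Module.End K L)ˣ) * mulUnits K L x * (g : (Module.End K L)ˣ)⁻¹ =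
      mulUnits K L (Units.map ((normalizerToGal g : L ≃ₐ[K] L) : L →* L) x) :=
  (conj_mulUnits_eq_iff g (normalizerToGal g : L →ₐ[K] L)).mpr
    (fun x ↦ (lmul_normalizerToGal g x).symm) x

lemma eq_normalizerToGal_of_conj (g : 𝒩[K, L]) (σ : L ≃ₐ[K] L)
    (hσ : ∀ x : Lˣ, (g : (Module.End K L)ˣ) * mulUnits K L x * (g : (Module.End K L)ˣ)⁻¹ =
      mulUnits K L (Units.map (σ : L →* L) x)) :
    σ = normalizerToGal g := by
  have hσ' := (conj_mulUnits_eq_iff g (σ : L →ₐ[K] L)).mp hσ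
  exact AlgEquiv.ext fun x ↦
    Algebra.lmul_injective (R := K) ((hσ' x).symm.trans (lmul_normalizerToGal g x).symm)

lemma normalizerToGal_surjective : Function.Surjective (normalizerToGal (K := K) (L := L)) :=
  fun σ ↦ ⟨⟨galToUnits σ, mem_normalizer_of_conj σ (galToUnits_conj σ)⟩,
    (eq_normalizerToGal_of_conj _ σ (galToUnits_conj σ)).symm⟩

lemma ker_normalizerToGal :
    (normalizerToGal (K := K) (L := L)).ker = (torus K L).subgroupOf 𝒩[K, L] := by
  ext g
  rw [MonoidHom.mem_ker, Subgroup.mem_subgroupOf, mem_torus_iff_forall_commute, AlgEquiv.ext_iff]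
  refine forall_congr' fun x ↦ ?_
  rw [← (Algebra.lmul_injective (R := K)).eq_iff, lmul_normalizerToGal,
    Units.mul_inv_eq_iff_eq_mul]
  rfl

end

theorem statement9_general (K L : Type) [Field K] [Field L] [Fintype L]
    [Algebra K L] :
    (∀ g ∈ (Subgroup.normalizer (torus K L : Set (Module.End K L)ˣ)), ∃! σ : L ≃ₐ[K] L,
      ∀ x : Lˣ, g * mulUnits K L x * g⁻¹ = mulUnits K L (Units.map (σ : L →* L) x)) ∧
    ∃ Φ : ↥(Subgroup.normalizer (torus K L : Set (Module.End K L)ˣ)) →* (L ≃ₐ[K] L),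
      (∀ (g : ↥(Subgroup.normalizer (torus K L : Set (Module.End K L)ˣ))) (x : Lˣ),
        (g : (Module.End K L)ˣ) * mulUnits K L x * (g : (Module.End K L)ˣ)⁻¹ =
          mulUnits K L (Units.map ((Φ g : L ≃ₐ[K] L) : L →* L) x)) ∧
      Function.Surjective Φ ∧
      Φ.ker = (torus K L).subgroupOf (Subgroup.normalizer (torus K L : Set (Module.End K L)ˣ)) ∧
      IsCyclic (↥(Subgroup.normalizer (torus K L : Set (Module.End K L)ˣ)) ⧸ Φ.ker) ∧
      Nat.card (↥(Subgroup.normalizer (torus K L : Set (Module.End K L)ˣ)) ⧸ Φ.ker) = Module.finrank K L := by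
  have quotientEquivGal :=
    QuotientGroup.quotientKerEquivOfSurjective _ (normalizerToGal_surjective (K := K) (L := L))
  refine ⟨fun g hg ↦ ⟨normalizerToGal ⟨g, hg⟩, conj_eq_normalizerToGal ⟨g, hg⟩,
      fun σ hσ ↦ eq_normalizerToGal_of_conj _ σ hσ⟩,
    normalizerToGal, conj_eq_normalizerToGal, normalizerToGal_surjective, ker_normalizerToGal,
    isCyclic_of_surjective _ quotientEquivGal.symm.surjective, ?_⟩
  rw [Nat.card_congr quotientEquivGal.toEquiv, IsGalois.card_aut_eq_finrank]

/-- Let `L/K` be an extension of finite fields and `T` the image of `Lˣ` in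
`G = (End_K(L))ˣ` under `x ↦ (multiplication by x)`. Then:
(a) every `g` in the normalizer of `T` induces a unique `σ_g ∈ Gal(L/K)` with
`g ∘ (mult. by x) ∘ g⁻¹ = (mult. by σ_g x)` for all `x ∈ Lˣ`; and
(b) `g ↦ σ_g` is a surjective group homomorphism from the normalizer of `T` onto
`Gal(L/K)` with kernel exactly `T`; in particular the quotient of the normalizer
of `T` by `T` is cyclic of order `[L:K]`. -/
theorem statement9 (K L : Type) [Field K] [Field L] [Fintype K] [Fintype L]
    [Algebra K L] :
    (∀ g ∈ (Subgroup.normalizer (torus K L : Set (Module.End K L)ˣ)), ∃! σ : L ≃ₐ[K] L,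
      ∀ x : Lˣ, g * mulUnits K L x * g⁻¹ = mulUnits K L (Units.map (σ : L →* L) x)) ∧
    ∃ Φ : ↥(Subgroup.normalizer (torus K L : Set (Module.End K L)ˣ)) →* (L ≃ₐ[K] L),
      (∀ (g : ↥(Subgroup.normalizer (torus K L : Set (Module.End K L)ˣ))) (x : Lˣ),
        (g : (Module.End K L)ˣ) * mulUnits K L x * (g : (Module.End K L)ˣ)⁻¹ =
          mulUnits K L (Units.map ((Φ g : L ≃ₐ[K] L) : L →* L) x)) ∧
      Function.Surjective Φ ∧
      Φ.ker = (torus K L).subgroupOf (Subgroup.normalizer (torus K L : Set (Module.End K L)ˣ)) ∧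
      IsCyclic (↥(Subgroup.normalizer (torus K L : Set (Module.End K L)ˣ)) ⧸ Φ.ker) ∧
      Nat.card (↥(Subgroup.normalizer (torus K L : Set (Module.End K L)ˣ)) ⧸ Φ.ker) = Module.finrank K L :=
  statement9_general K L
end
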